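/- arXiv:2004.08412 — 2 statements merged into one kernel-verified Lean document; each statement's English description precedes it below -/
import Mathlib

section
/- Let p : ℤ^d → ℝ be nonnegative, finitely supported, and satisfy Σ_r r_j p(r) = 0 for every coordinate j and Σ_r r_j r_ℓ p(r) = χ·δ_{jℓ} for all coordinates j, ℓ, where χ ≥ 0. Let φ : ℝ^d → ℝ be a Schwartz function. Then there exists a constant C > 0 such that for every integer n ≥ 1: Σ_{x ∈ ℤ^d} | n² · Σ_{r ∈ ℤ^d} p(r) · ( φ((x+r)/n) − φ(x/n) ) − (χ/2) · Δφ(x/n) | ≤ C · n^{d−1}. Equivalently, writing the pointwise error as (1/n)·ψ_n(x/n), one has sup_n n^{−d} Σ_{x∈ℤ^d} |ψ_n(x/n)| < ∞. -/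
/-!
Put `a = x/n` and `v = r/n`. Because the first moments of `p` vanish and its second moments are
`χ δ_{jℓ}`, the first-order Taylor terms of `∑_r p(r) (φ(a + v) - φ(a))` cancel and the
second-order ones add up to `(χ/2n²) Δφ(a)`. The error at `x` is therefore `n²` times a
`p`-weighted sum of second-order Taylor remainders, each at most `|v|³ ≲ n⁻³` times the size of
`D³φ` on the segment `[a, a + v]`. Schwartz decay together with
`1 + ‖a‖ ≤ (1 + ‖v‖)(1 + ‖a + tv‖)` bounds the latter by a multiple of `∏_j (1 + |a_j|)⁻²`, whose
sum over `x ∈ ℤ^d` is at most `(4n)^d`; so the total error is `O(n⁻¹ · n^d)`.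
-/

open Set

lemma one_add_norm_le_mul_one_add_norm_add {G : Type*} [SeminormedAddCommGroup G] (a w : G) :
    1 + ‖a‖ ≤ (1 + ‖w‖) * (1 + ‖a + w‖) := by
  have : ‖a‖ ≤ ‖a + w‖ + ‖w‖ := by simpa using norm_sub_le (a + w) w
  nlinarith [norm_nonneg w, norm_nonneg (a + w)]

lemma inv_one_add_norm_pow_le_prod {ι : Type*} [Fintype ι] (a : ι → ℝ) :
    ((1 + ‖a‖) ^ (2 * Fintype.card ι))⁻¹ ≤ ∏ i, ((1 + |a i|) ^ 2)⁻¹ := by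
  rw [Finset.prod_inv_distrib, pow_mul, ← Finset.card_univ, ← Finset.prod_const]
  gcongr ((∏ i ∈ _, (1 + ?_) ^ 2))⁻¹ with i
  simpa using norm_le_pi_norm a i

lemma abs_sub_le_of_hasDerivAt_of_abs_deriv_le {u u' : ℝ → ℝ} {C : ℝ}
    (hu : ∀ t, HasDerivAt u (u' t) t) (hC : ∀ t ∈ Icc (0 : ℝ) 1, |u' t| ≤ C)
    {t : ℝ} (ht : t ∈ Icc (0 : ℝ) 1) : |u t - u 0| ≤ C := by
  have hC₀ : 0 ≤ C := (abs_nonneg _).trans (hC 0 (left_mem_Icc.2 zero_le_one))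
  calc |u t - u 0| ≤ C * (t - 0) :=
        norm_image_sub_le_of_norm_deriv_le_segment' (fun s _ => (hu s).hasDerivWithinAt)
          (fun s hs => hC s (Ico_subset_Icc_self hs)) t ht
    _ ≤ C := by nlinarith [ht.2]

lemma abs_taylor_two_remainder_le_of_hasDerivAt {g g₁ g₂ g₃ : ℝ → ℝ} {C : ℝ}
    (h₀ : ∀ t, HasDerivAt g (g₁ t) t) (h₁ : ∀ t, HasDerivAt g₁ (g₂ t) t)
    (h₂ : ∀ t, HasDerivAt g₂ (g₃ t) t) (hC : ∀ t ∈ Icc (0 : ℝ) 1, |g₃ t| ≤ C) :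
    |g 1 - g 0 - g₁ 0 - g₂ 0 / 2| ≤ C := by
  have hg₂ : ∀ t ∈ Icc (0 : ℝ) 1, |g₂ t - g₂ 0| ≤ C := fun t ht =>
    abs_sub_le_of_hasDerivAt_of_abs_deriv_le h₂ hC ht
  have hg₁ : ∀ t ∈ Icc (0 : ℝ) 1, |g₁ t - g₁ 0 - t * g₂ 0| ≤ C := fun t ht => by
    have h : ∀ t, HasDerivAt (fun t => g₁ t - t * g₂ 0) (g₂ t - g₂ 0) t := fun t =>
      (h₁ t).sub (hasDerivAt_mul_const (g₂ 0))
    simpa [sub_right_comm] using abs_sub_le_of_hasDerivAt_of_abs_deriv_le h hg₂ ht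
  have hg : ∀ t, HasDerivAt (fun t => g t - t * g₁ 0 - t ^ 2 / 2 * g₂ 0)
      (g₁ t - g₁ 0 - t * g₂ 0) t := fun t =>
    (((h₀ t).sub (hasDerivAt_mul_const (g₁ 0))).sub
      (((hasDerivAt_pow 2 t).div_const 2).mul_const (g₂ 0))).congr_deriv (by push_cast; ring)
  convert abs_sub_le_of_hasDerivAt_of_abs_deriv_le hg hg₁ (right_mem_Icc.2 zero_le_one) using 2
  ring

section Taylor

variable {E F : Type*} [NormedAddCommGroup E] [NormedSpace ℝ E]
  [NormedAddCommGroup F] [NormedSpace ℝ F]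

lemma hasDerivAt_iteratedFDeriv_comp_add_smul {f : E → F} {n : ℕ} (hf : ContDiff ℝ (n + 1) f)
    (a v : E) (t : ℝ) :
    HasDerivAt (fun s : ℝ => iteratedFDeriv ℝ n f (a + s • v) (fun _ => v))
      (iteratedFDeriv ℝ (n + 1) f (a + t • v) (fun _ => v)) t := by
  have hline : HasDerivAt (fun s : ℝ => a + s • v) v t := by
    simpa using ((hasDerivAt_id t).smul_const v).const_add a
  have hD := (hf.differentiable_iteratedFDeriv (m := n) (by exact_mod_cast Nat.lt_succ_self n)
    (a + t • v)).hasFDerivAt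
  rw [iteratedFDeriv_succ_apply_left]
  exact (ContinuousMultilinearMap.apply ℝ (fun _ : Fin n => E) F (fun _ => v)).hasFDerivAt
      |>.comp_hasDerivAt t (hD.comp_hasDerivAt t hline)

theorem abs_taylor_two_remainder_le {f : E → ℝ} (hf : ContDiff ℝ 3 f) (a v : E) {B : ℝ}
    (hB : ∀ t ∈ Icc (0 : ℝ) 1, ‖iteratedFDeriv ℝ 3 f (a + t • v)‖ ≤ B) :
    |f (a + v) - f a - fderiv ℝ f a v - fderiv ℝ (fderiv ℝ f) a v v / 2| ≤ B * ‖v‖ ^ 3 := by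
  have key := abs_taylor_two_remainder_le_of_hasDerivAt
    (hasDerivAt_iteratedFDeriv_comp_add_smul (hf.of_le (by norm_num)) a v)
    (hasDerivAt_iteratedFDeriv_comp_add_smul (hf.of_le (by norm_num)) a v)
    (hasDerivAt_iteratedFDeriv_comp_add_smul hf a v) (C := B * ‖v‖ ^ 3) fun t ht => by
      simpa using ((iteratedFDeriv ℝ 3 f (a + t • v)).le_opNorm fun _ => v).trans
        (mul_le_mul_of_nonneg_right (hB t ht) (by positivity))
  simpa [iteratedFDeriv_two_apply] using key

lemma SchwartzMap.exists_norm_iteratedFDeriv_le (φ : SchwartzMap E F) (k n : ℕ) :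
    ∃ C, 0 ≤ C ∧ ∀ y, ‖iteratedFDeriv ℝ n φ y‖ ≤ C * ((1 + ‖y‖) ^ k)⁻¹ := by
  refine ⟨2 ^ k * (Finset.Iic (k, n)).sup (fun m => SchwartzMap.seminorm ℝ m.1 m.2) φ,
    by positivity, fun y => ?_⟩
  rw [← div_eq_mul_inv, le_div_iff₀ (by positivity), mul_comm]
  exact one_add_le_sup_seminorm_apply (𝕜 := ℝ) (m := (k, n)) le_rfl le_rfl φ y

theorem abs_taylor_two_remainder_le_of_decay {f : E → ℝ} (hf : ContDiff ℝ 3 f) {C : ℝ} {k : ℕ}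
    (hdecay : ∀ y, ‖iteratedFDeriv ℝ 3 f y‖ ≤ C * ((1 + ‖y‖) ^ k)⁻¹) (a v : E) :
    |f (a + v) - f a - fderiv ℝ f a v - fderiv ℝ (fderiv ℝ f) a v v / 2|
      ≤ C * (1 + ‖v‖) ^ k * ((1 + ‖a‖) ^ k)⁻¹ * ‖v‖ ^ 3 := by
  have hC : 0 ≤ C := by simpa using (norm_nonneg _).trans (hdecay 0)
  refine abs_taylor_two_remainder_le hf a v fun t ht => (hdecay _).trans ?_
  have htv : ‖t • v‖ ≤ ‖v‖ := by
    rw [norm_smul, Real.norm_of_nonneg ht.1]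
    exact mul_le_of_le_one_left (norm_nonneg v) ht.2
  have hpeetre : 1 + ‖a‖ ≤ (1 + ‖v‖) * (1 + ‖a + t • v‖) :=
    (one_add_norm_le_mul_one_add_norm_add a (t • v)).trans (by gcongr)
  rw [mul_assoc]
  gcongr C * ?_
  rw [← div_eq_mul_inv, le_div_iff₀ (by positivity), inv_mul_le_iff₀ (by positivity), ← mul_pow,
    mul_comm]
  gcongr

end Taylor

section Moments

variable {d : ℕ} {ι : Type*} (s : Finset ι) (c : ι → ℝ) (v : ι → Fin d → ℝ)

lemma sum_mul_apply_eq_zero_of_moment_eq_zero (h : ∀ j, ∑ i ∈ s, v i j * c i = 0)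
    (L : (Fin d → ℝ) →L[ℝ] ℝ) : ∑ i ∈ s, c i * L (v i) = 0 := by
  have hmean : ∑ i ∈ s, c i • v i = 0 := funext fun j => by
    simpa [Finset.sum_apply, mul_comm] using h j
  simp_rw [← smul_eq_mul, ← map_smul, ← map_sum, hmean, map_zero]

lemma sum_mul_apply_apply_eq_of_moment_eq {χ : ℝ}
    (h : ∀ j ℓ, ∑ i ∈ s, v i j * v i ℓ * c i = if j = ℓ then χ else 0)
    (B : (Fin d → ℝ) →L[ℝ] (Fin d → ℝ) →L[ℝ] ℝ) :
    ∑ i ∈ s, c i * B (v i) (v i) = χ * ∑ ℓ, B (Pi.single ℓ 1) (Pi.single ℓ 1) := by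
  have hB : ∀ w w' : Fin d → ℝ,
      B w w' = ∑ j, ∑ ℓ, w j * w' ℓ * B (Pi.single j 1) (Pi.single ℓ 1) := fun w w' => by
    conv_lhs => rw [pi_eq_sum_univ' w, pi_eq_sum_univ' w']
    simp only [map_sum, map_smul, FunLike.coe_sum, FunLike.coe_smul,
      Finset.sum_apply, Pi.smul_apply, smul_eq_mul, Finset.mul_sum]
    rw [Finset.sum_comm]
    exact Finset.sum_congr rfl fun j _ => Finset.sum_congr rfl fun ℓ _ => by ring
  calc ∑ i ∈ s, c i * B (v i) (v i)
      = ∑ i ∈ s, ∑ j, ∑ ℓ, v i j * v i ℓ * c i * B (Pi.single j 1) (Pi.single ℓ 1) :=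
        Finset.sum_congr rfl fun i _ => by
          rw [hB, Finset.mul_sum]
          exact Finset.sum_congr rfl fun j _ => by rw [Finset.mul_sum]; congr! 1 with ℓ; ring
    _ = ∑ j, ∑ ℓ, (∑ i ∈ s, v i j * v i ℓ * c i) * B (Pi.single j 1) (Pi.single ℓ 1) := by
        simp only [Finset.sum_mul]
        rw [Finset.sum_comm]
        exact Finset.sum_congr rfl fun j _ => Finset.sum_comm
    _ = χ * ∑ ℓ, B (Pi.single ℓ 1) (Pi.single ℓ 1) := by
        simp only [h, ite_mul, zero_mul, Finset.sum_ite_eq, Finset.mem_univ, if_true,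
          Finset.mul_sum]

variable {s c v} in
theorem sum_mul_sub_sub_eq_sum_mul_taylor_remainder {χ : ℝ}
    (h₁ : ∀ j, ∑ i ∈ s, v i j * c i = 0)
    (h₂ : ∀ j ℓ, ∑ i ∈ s, v i j * v i ℓ * c i = if j = ℓ then χ else 0)
    (f : (Fin d → ℝ) → ℝ) (a : Fin d → ℝ) :
    ∑ i ∈ s, c i * (f (a + v i) - f a)
        - χ / 2 * ∑ ℓ, fderiv ℝ (fderiv ℝ f) a (Pi.single ℓ 1) (Pi.single ℓ 1)
      = ∑ i ∈ s, c i * (f (a + v i) - f a - fderiv ℝ f a (v i)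
          - fderiv ℝ (fderiv ℝ f) a (v i) (v i) / 2) := by
  have e₁ := sum_mul_apply_eq_zero_of_moment_eq_zero s c v h₁ (fderiv ℝ f a)
  have e₂ := sum_mul_apply_apply_eq_of_moment_eq s c v h₂ (fderiv ℝ (fderiv ℝ f) a)
  simp only [mul_sub, Finset.sum_sub_distrib, mul_div_assoc', ← Finset.sum_div, e₁, e₂]
  ring

end Moments

lemma summable_and_tsum_inv_one_add_div_sq_le {n : ℕ} (hn : 1 ≤ n) :
    Summable (fun m : ℕ => ((1 + (m : ℝ) / n) ^ 2)⁻¹) ∧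
      ∑' m : ℕ, ((1 + (m : ℝ) / n) ^ 2)⁻¹ ≤ 2 * (n : ℝ) := by
  have hn₀ : (0 : ℝ) < n := by exact_mod_cast hn
  have h₀ : ∀ m : ℕ, 0 ≤ ((1 + (m : ℝ) / n) ^ 2)⁻¹ := fun m => by positivity
  have hpartial : ∀ N, ∑ m ∈ Finset.range N, ((1 + (m : ℝ) / n) ^ 2)⁻¹ ≤ 2 * (n : ℝ) := fun N =>
    calc ∑ m ∈ Finset.range N, ((1 + (m : ℝ) / n) ^ 2)⁻¹
        = n ^ 2 * ∑ m ∈ Finset.range N, ((((m + n : ℕ) : ℝ)) ^ 2)⁻¹ := by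
          rw [Finset.mul_sum]
          refine Finset.sum_congr rfl fun m _ => ?_
          push_cast
          field_simp
          ring
      _ = n ^ 2 * ∑ i ∈ Finset.Ico n (N + n), ((i : ℝ) ^ 2)⁻¹ := by
          rw [Finset.range_eq_Ico, Finset.sum_Ico_add' (fun i : ℕ => ((i : ℝ) ^ 2)⁻¹), zero_add]
      _ ≤ n ^ 2 * ∑ i ∈ Finset.Ioo (n - 1) (N + n), ((i : ℝ) ^ 2)⁻¹ := by
          gcongr
          intro i hi
          simp only [Finset.mem_Ico, Finset.mem_Ioo] at hi ⊢
          omega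
      _ ≤ n ^ 2 * (2 / ((n - 1 : ℕ) + 1)) := by gcongr; exact sum_Ioo_inv_sq_le _ _
      _ = 2 * n := by
          rw [Nat.cast_sub hn, Nat.cast_one, sub_add_cancel]
          field_simp
  exact ⟨summable_of_sum_range_le h₀ hpartial, Real.tsum_le_of_sum_range_le h₀ hpartial⟩

lemma summable_and_tsum_int_inv_one_add_abs_div_sq_le {n : ℕ} (hn : 1 ≤ n) :
    Summable (fun k : ℤ => ((1 + |(k : ℝ) / n|) ^ 2)⁻¹) ∧
      ∑' k : ℤ, ((1 + |(k : ℝ) / n|) ^ 2)⁻¹ ≤ 4 * (n : ℝ) := by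
  obtain ⟨hs, hle⟩ := summable_and_tsum_inv_one_add_div_sq_le hn
  have hpos : HasSum (fun m : ℕ => ((1 + |((m : ℤ) : ℝ) / n|) ^ 2)⁻¹)
      (∑' m : ℕ, ((1 + (m : ℝ) / n) ^ 2)⁻¹) := by
    simpa only [Int.cast_natCast, abs_div, Nat.abs_cast] using hs.hasSum
  have hneg : HasSum (fun m : ℕ => ((1 + |((-m : ℤ) : ℝ) / n|) ^ 2)⁻¹)
      (∑' m : ℕ, ((1 + (m : ℝ) / n) ^ 2)⁻¹) := by
    simpa only [Int.cast_neg, Int.cast_natCast, neg_div, abs_neg, abs_div, Nat.abs_cast]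
      using hs.hasSum
  have hint := HasSum.of_nat_of_neg (f := fun k : ℤ => ((1 + |(k : ℝ) / n|) ^ 2)⁻¹) hpos hneg
  refine ⟨hint.summable, ?_⟩
  rw [hint.tsum_eq]
  simp only [Int.cast_zero, zero_div, abs_zero, add_zero, one_pow, inv_one]
  linarith

lemma hasSum_prod_fin_of_nonneg {α : Type*} {g : α → ℝ} {S : ℝ} (hg₀ : ∀ k, 0 ≤ g k)
    (hg : HasSum g S) (d : ℕ) : HasSum (fun x : Fin d → α => ∏ j, g (x j)) (S ^ d) := by
  induction d with
  | zero => simp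
  | succ d ih =>
    have hsum : Summable fun z : α × (Fin d → α) => g z.1 * ∏ j, g (z.2 j) :=
      Summable.mul_of_nonneg (f := g) (g := fun x : Fin d → α => ∏ j, g (x j)) hg.summable
        ih.summable hg₀ fun x => Finset.prod_nonneg fun j _ => hg₀ _
    have hprod := HasSum.mul (f := g) (g := fun x : Fin d → α => ∏ j, g (x j)) hg ih hsum
    have hsplit : (fun x : Fin (d + 1) → α => ∏ j, g (x j))
        = (fun z : α × (Fin d → α) => g z.1 * ∏ j, g (z.2 j)) ∘ (Fin.consEquiv fun _ => α).symm :=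
      funext fun x => Fin.prod_univ_succ _
    rw [hsplit, Equiv.hasSum_iff, pow_succ']
    exact hprod

lemma summable_and_tsum_prod_inv_one_add_abs_div_sq_le {n : ℕ} (hn : 1 ≤ n) (d : ℕ) :
    Summable (fun x : Fin d → ℤ => ∏ j, ((1 + |(x j : ℝ) / n|) ^ 2)⁻¹) ∧
      ∑' x : Fin d → ℤ, ∏ j, ((1 + |(x j : ℝ) / n|) ^ 2)⁻¹ ≤ (4 * (n : ℝ)) ^ d := by
  obtain ⟨hs, hle⟩ := summable_and_tsum_int_inv_one_add_abs_div_sq_le hn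
  have h := hasSum_prod_fin_of_nonneg (fun k => by positivity) hs.hasSum d
  exact ⟨h.summable, h.tsum_eq ▸ pow_le_pow_left₀ (tsum_nonneg fun k => by positivity) hle d⟩

lemma summable_and_tsum_abs_le_of_abs_le_div_mul_prod {d n : ℕ} (hn : 1 ≤ n)
    {F : (Fin d → ℤ) → ℝ} {A : ℝ} (hA : 0 ≤ A)
    (hF : ∀ x, |F x| ≤ A / n * ∏ j, ((1 + |(x j : ℝ) / n|) ^ 2)⁻¹) :
    Summable (fun x => |F x|) ∧ ∑' x, |F x| ≤ A * 4 ^ d * (n : ℝ) ^ (d - 1) := by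
  obtain ⟨hG, hM⟩ := summable_and_tsum_prod_inv_one_add_abs_div_sq_le hn d
  have hn₀ : (0 : ℝ) < n := by exact_mod_cast hn
  have hG' := hG.mul_left (A / n)
  have hsum : Summable fun x => |F x| := .of_nonneg_of_le (fun x => abs_nonneg _) hF hG'
  have hpow : (n : ℝ) ^ d ≤ n * n ^ (d - 1) := by
    rw [← pow_succ']
    exact pow_le_pow_right₀ (by exact_mod_cast hn) (by omega)
  refine ⟨hsum, ?_⟩
  calc ∑' x, |F x| ≤ ∑' x : Fin d → ℤ, A / n * ∏ j, ((1 + |(x j : ℝ) / n|) ^ 2)⁻¹ :=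
        hsum.tsum_le_tsum hF hG'
    _ ≤ A / n * (4 * n) ^ d := by rw [tsum_mul_left]; gcongr
    _ = A * 4 ^ d * (n ^ d / n) := by rw [mul_pow]; ring
    _ ≤ A * 4 ^ d * n ^ (d - 1) := by
        gcongr
        rw [div_le_iff₀ hn₀, mul_comm]
        exact hpow

theorem sq_mul_sum_sub_sub_eq_sq_mul_sum_taylor_remainder {d : ℕ} {s : Finset (Fin d → ℤ)}
    {p : (Fin d → ℤ) → ℝ} {χ : ℝ} (hm₁ : ∀ j, ∑ r ∈ s, (r j : ℝ) * p r = 0)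
    (hm₂ : ∀ j ℓ, ∑ r ∈ s, (r j : ℝ) * (r ℓ : ℝ) * p r = if j = ℓ then χ else 0)
    (f : (Fin d → ℝ) → ℝ) {n : ℝ} (hn : n ≠ 0) (a : Fin d → ℝ) :
    n ^ 2 * ∑ r ∈ s, p r * (f (a + fun j => (r j : ℝ) / n) - f a)
        - χ / 2 * ∑ ℓ, fderiv ℝ (fderiv ℝ f) a (Pi.single ℓ 1) (Pi.single ℓ 1)
      = n ^ 2 * ∑ r ∈ s, p r * (f (a + fun j => (r j : ℝ) / n) - f a
          - fderiv ℝ f a (fun j => (r j : ℝ) / n)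
          - fderiv ℝ (fderiv ℝ f) a (fun j => (r j : ℝ) / n) (fun j => (r j : ℝ) / n) / 2) := by
  have h₁ : ∀ j, ∑ r ∈ s, (r j : ℝ) / n * p r = 0 := fun j => by
    simp only [div_mul_eq_mul_div, ← Finset.sum_div, hm₁ j, zero_div]
  have h₂ : ∀ j ℓ, ∑ r ∈ s, (r j : ℝ) / n * ((r ℓ : ℝ) / n) * p r
      = if j = ℓ then χ / n ^ 2 else 0 := fun j ℓ => by
    have hsc : ∀ r : Fin d → ℤ, (r j : ℝ) / n * ((r ℓ : ℝ) / n) * p r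
        = (r j : ℝ) * (r ℓ : ℝ) * p r / n ^ 2 := fun r => by ring
    simp only [hsc, ← Finset.sum_div, hm₂ j ℓ]
    split_ifs <;> simp
  rw [← sum_mul_sub_sub_eq_sum_mul_taylor_remainder h₁ h₂]
  field_simp

theorem abs_taylor_two_remainder_le_mul_prod {d : ℕ} {f : (Fin d → ℝ) → ℝ} (hf : ContDiff ℝ 3 f)
    {C : ℝ} (hdecay : ∀ y, ‖iteratedFDeriv ℝ 3 f y‖ ≤ C * ((1 + ‖y‖) ^ (2 * d))⁻¹)
    (a v : Fin d → ℝ) {ρ R : ℝ} (hvρ : ‖v‖ ≤ ρ) (hρR : ρ ≤ R) :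
    |f (a + v) - f a - fderiv ℝ f a v - fderiv ℝ (fderiv ℝ f) a v v / 2|
      ≤ C * (1 + R) ^ (2 * d) * (∏ j, ((1 + |a j|) ^ 2)⁻¹) * ρ ^ 3 := by
  have hC : 0 ≤ C := by simpa using (norm_nonneg _).trans (hdecay 0)
  have hW := inv_one_add_norm_pow_le_prod a
  rw [Fintype.card_fin] at hW
  refine (abs_taylor_two_remainder_le_of_decay hf hdecay a v).trans ?_
  have hR₀ : 0 ≤ 1 + R := by linarith [norm_nonneg v]
  have hCR : 0 ≤ C * (1 + R) ^ (2 * d) := mul_nonneg hC (pow_nonneg hR₀ _)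
  gcongr
  linarith

theorem abs_generator_sub_laplacian_le {d : ℕ} {s : Finset (Fin d → ℤ)}
    {p : (Fin d → ℤ) → ℝ} {χ : ℝ} (hm₁ : ∀ j, ∑ r ∈ s, (r j : ℝ) * p r = 0)
    (hm₂ : ∀ j ℓ, ∑ r ∈ s, (r j : ℝ) * (r ℓ : ℝ) * p r = if j = ℓ then χ else 0)
    {f : (Fin d → ℝ) → ℝ} (hf : ContDiff ℝ 3 f) {C : ℝ}
    (hdecay : ∀ y, ‖iteratedFDeriv ℝ 3 f y‖ ≤ C * ((1 + ‖y‖) ^ (2 * d))⁻¹)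
    {R : ℝ} (hR : ∀ r ∈ s, ‖fun j => (r j : ℝ)‖ ≤ R) {n : ℕ} (hn : 1 ≤ n) (x : Fin d → ℤ) :
    |(n : ℝ) ^ 2 * ∑ r ∈ s, p r *
          (f (fun j => ((x j : ℝ) + (r j : ℝ)) / n) - f (fun j => (x j : ℝ) / n))
        - χ / 2 * ∑ ℓ, fderiv ℝ (fderiv ℝ f) (fun j => (x j : ℝ) / n)
            (Pi.single ℓ 1) (Pi.single ℓ 1)|
      ≤ (∑ r ∈ s, |p r|) * C * (1 + R) ^ (2 * d) * R ^ 3 / n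
          * ∏ j, ((1 + |(x j : ℝ) / n|) ^ 2)⁻¹ := by
  have hn₀ : (0 : ℝ) < n := by exact_mod_cast hn
  set a : Fin d → ℝ := fun j => (x j : ℝ) / n
  set v : (Fin d → ℤ) → Fin d → ℝ := fun r j => (r j : ℝ) / n
  have hshift : ∀ r, (fun j => ((x j : ℝ) + (r j : ℝ)) / n) = a + v r := fun r =>
    funext fun j => add_div _ _ _
  have hv : ∀ r ∈ s, ‖v r‖ ≤ R / n := fun r hr => by
    have : v r = (n : ℝ)⁻¹ • fun j => (r j : ℝ) := by ext; simp [v, div_eq_inv_mul]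
    rw [this, norm_smul, norm_inv, Real.norm_natCast, inv_mul_eq_div]
    gcongr
    exact hR r hr
  have hRn : ∀ r ∈ s, R / n ≤ R := fun r hr =>
    div_le_self ((norm_nonneg _).trans (hR r hr)) (by exact_mod_cast hn)
  simp only [hshift]
  rw [sq_mul_sum_sub_sub_eq_sq_mul_sum_taylor_remainder hm₁ hm₂ f hn₀.ne', abs_mul,
    abs_of_pos (by positivity)]
  calc (n : ℝ) ^ 2 * |∑ r ∈ s, p r * (f (a + v r) - f a - fderiv ℝ f a (v r)
          - fderiv ℝ (fderiv ℝ f) a (v r) (v r) / 2)|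
      ≤ (n : ℝ) ^ 2 * ∑ r ∈ s, |p r| * (C * (1 + R) ^ (2 * d)
          * (∏ j, ((1 + |(x j : ℝ) / n|) ^ 2)⁻¹) * (R / n) ^ 3) := by
        gcongr
        refine (Finset.abs_sum_le_sum_abs _ _).trans (Finset.sum_le_sum fun r hr => ?_)
        rw [abs_mul]
        gcongr
        exact abs_taylor_two_remainder_le_mul_prod hf hdecay a (v r) (hv r hr) (hRn r hr)
    _ = _ := by
        rw [← Finset.sum_mul]
        field_simp

theorem rescaled_generator_error_sum_bound_general {d : ℕ}
    (p : (Fin d → ℤ) → ℝ)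
    (hfin : (Function.support p).Finite)
    (χ : ℝ)
    (hmom1 : ∀ j : Fin d, ∑ᶠ r : Fin d → ℤ, (r j : ℝ) * p r = 0)
    (hmom2 : ∀ j ℓ : Fin d,
      ∑ᶠ r : Fin d → ℤ, (r j : ℝ) * (r ℓ : ℝ) * p r = if j = ℓ then χ else 0)
    (φ : SchwartzMap (Fin d → ℝ) ℝ) :
    ∃ C : ℝ, 0 < C ∧ ∀ n : ℕ, 1 ≤ n →
      Summable (fun x : Fin d → ℤ =>
        |(n : ℝ) ^ 2 *
            (∑ᶠ r : Fin d → ℤ, p r *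
              (φ (fun j => ((x j : ℝ) + (r j : ℝ)) / n) - φ (fun j => (x j : ℝ) / n)))
          - (χ / 2) *
              ∑ ℓ : Fin d,
                iteratedFDeriv ℝ 2 (fun y => φ y) (fun j => (x j : ℝ) / n)
                  (fun _ => Pi.single ℓ 1)|) ∧
      (∑' x : Fin d → ℤ,
        |(n : ℝ) ^ 2 *
            (∑ᶠ r : Fin d → ℤ, p r *
              (φ (fun j => ((x j : ℝ) + (r j : ℝ)) / n) - φ (fun j => (x j : ℝ) / n)))
          - (χ / 2) *
              ∑ ℓ : Fin d,
                iteratedFDeriv ℝ 2 (fun y => φ y) (fun j => (x j : ℝ) / n)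
                  (fun _ => Pi.single ℓ 1)|)
        ≤ C * (n : ℝ) ^ (d - 1) := by
  set s := hfin.toFinset
  have hsupp : Function.support p ⊆ s := hfin.coe_toFinset.symm.subset
  have hs₁ : ∀ F : (Fin d → ℤ) → ℝ, ∑ᶠ r, p r * F r = ∑ r ∈ s, p r * F r := fun F =>
    finsum_eq_sum_of_support_subset _ ((Function.support_mul_subset_left _ _).trans hsupp)
  have hs₂ : ∀ F : (Fin d → ℤ) → ℝ, ∑ᶠ r, F r * p r = ∑ r ∈ s, F r * p r := fun F =>
    finsum_eq_sum_of_support_subset _ ((Function.support_mul_subset_right _ _).trans hsupp)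
  obtain ⟨C, hC₀, hdecay⟩ := φ.exists_norm_iteratedFDeriv_le (2 * d) 3
  set R := ∑ r ∈ s, ‖fun j => (r j : ℝ)‖
  have hR : ∀ r ∈ s, ‖fun j => (r j : ℝ)‖ ≤ R := fun r hr =>
    Finset.single_le_sum (f := fun r : Fin d → ℤ => ‖fun j => (r j : ℝ)‖)
      (fun _ _ => norm_nonneg _) hr
  set A := (∑ r ∈ s, |p r|) * C * (1 + R) ^ (2 * d) * R ^ 3
  refine ⟨A * 4 ^ d + 1, by positivity, fun n hn => ?_⟩
  refine (summable_and_tsum_abs_le_of_abs_le_div_mul_prod hn (A := A) (by positivity)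
    fun x => ?_).imp_right fun h => h.trans (by gcongr; linarith)
  rw [hs₁]
  simp only [iteratedFDeriv_two_apply]
  exact abs_generator_sub_laplacian_le (fun j => (hs₂ _).symm.trans (hmom1 j))
    (fun j ℓ => (hs₂ _).symm.trans (hmom2 j ℓ)) (φ.smooth 3) hdecay hR hn x

/-- Summed version of the diffusive Taylor estimate: if `p : ℤ^d → ℝ` is nonnegative,
finitely supported, with vanishing first moments and second moments `χ δ_{jℓ}`, and
`φ` is a Schwartz function on `ℝ^d`, then the total (over `x ∈ ℤ^d`) absolute error
between `n² ∑_r p(r)(φ((x+r)/n) - φ(x/n))` and `(χ/2) Δφ(x/n)` is summable and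
bounded by `C n^{d-1}`. -/
theorem rescaled_generator_error_sum_bound {d : ℕ}
    (p : (Fin d → ℤ) → ℝ) (hp : ∀ r, 0 ≤ p r)
    (hfin : (Function.support p).Finite)
    (χ : ℝ) (hχ : 0 ≤ χ)
    (hmom1 : ∀ j : Fin d, ∑ᶠ r : Fin d → ℤ, (r j : ℝ) * p r = 0)
    (hmom2 : ∀ j ℓ : Fin d,
      ∑ᶠ r : Fin d → ℤ, (r j : ℝ) * (r ℓ : ℝ) * p r = if j = ℓ then χ else 0)
    (φ : SchwartzMap (Fin d → ℝ) ℝ) :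
    ∃ C : ℝ, 0 < C ∧ ∀ n : ℕ, 1 ≤ n →
      Summable (fun x : Fin d → ℤ =>
        |(n : ℝ) ^ 2 *
            (∑ᶠ r : Fin d → ℤ, p r *
              (φ (fun j => ((x j : ℝ) + (r j : ℝ)) / n) - φ (fun j => (x j : ℝ) / n)))
          - (χ / 2) *
              ∑ ℓ : Fin d,
                iteratedFDeriv ℝ 2 (fun y => φ y) (fun j => (x j : ℝ) / n)
                  (fun _ => Pi.single ℓ 1)|) ∧
      (∑' x : Fin d → ℤ,
        |(n : ℝ) ^ 2 *
            (∑ᶠ r : Fin d → ℤ, p r *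
              (φ (fun j => ((x j : ℝ) + (r j : ℝ)) / n) - φ (fun j => (x j : ℝ) / n)))
          - (χ / 2) *
              ∑ ℓ : Fin d,
                iteratedFDeriv ℝ 2 (fun y => φ y) (fun j => (x j : ℝ) / n)
                  (fun _ => Pi.single ℓ 1)|)
        ≤ C * (n : ℝ) ^ (d - 1) :=
  rescaled_generator_error_sum_bound_general p hfin χ hmom1 hmom2 φ
end

section
/- Let g : ℕ → ℝ with g(0) = 1, and let 𝔡 : ℕ × ℕ → ℝ satisfy the recursion 𝔡(m, n+1) = Σ_{j=0}^{m} g(m−j)·𝔡(j, n) for all m, n ∈ ℕ. Then for all s ∈ ℕ, all u, v ∈ ℝ, and all a, b ∈ ℕ with a ≥ 1: Σ_{r=0}^{s} u^r · v^{s−r} · ( 𝔡(r, a−1)·𝔡(s−r, b+1) − 𝔡(r, a)·𝔡(s−r, b) ) = Σ_{ℓ=0}^{s−1} ( v^{s−ℓ} − u^{s−ℓ} ) · g(s−ℓ) · Σ_{r=0}^{ℓ} u^r · v^{ℓ−r} · 𝔡(r, a−1)·𝔡(ℓ−r, b). -/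
/-!
In generating-function form, with `D_n(z) = ∑ₘ 𝔡(m, n) zᵐ` and `G(z) = ∑ₖ g(k) zᵏ`, the recursion
says `D_{n+1} = G · D_n`. The left-hand side is the coefficient of `zˢ` in
`D_{a-1}(uz) D_{b+1}(vz) - D_a(uz) D_b(vz) = D_{a-1}(uz) D_b(vz) (G(vz) - G(uz))`, and the last
factor has no constant term; expanding its coefficient as a Cauchy product gives the right-hand side.
-/

open Finset

namespace PowerSeries

section Semiring

variable {R : Type*} [Semiring R]

theorem coeff_mul_eq_sum_range (f g : R⟦X⟧) (n : ℕ) :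
    coeff n (f * g) = ∑ i ∈ range (n + 1), coeff i f * coeff (n - i) g := by
  rw [coeff_mul, Nat.sum_antidiagonal_eq_sum_range_succ_mk]

theorem coeff_mul_eq_sum_range_of_constantCoeff_eq_zero (f : R⟦X⟧) {g : R⟦X⟧}
    (hg : constantCoeff g = 0) (n : ℕ) :
    coeff n (f * g) = ∑ i ∈ range n, coeff i f * coeff (n - i) g := by
  rw [coeff_mul_eq_sum_range, sum_range_succ, Nat.sub_self, coeff_zero_eq_constantCoeff_apply,
    hg, mul_zero, add_zero]

end Semiring

variable {R : Type*} [CommSemiring R]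

theorem mk_sum_range_mul_eq_mul (g d : ℕ → R) :
    mk (fun m ↦ ∑ j ∈ range (m + 1), g (m - j) * d j) = mk g * mk d := by
  ext m
  simp only [coeff_mk, mul_comm (mk g), coeff_mul_eq_sum_range, mul_comm (d _)]

theorem coeff_rescale_mul_rescale (a b : R) (f g : R⟦X⟧) (n : ℕ) :
    coeff n (rescale a f * rescale b g)
      = ∑ i ∈ range (n + 1), a ^ i * b ^ (n - i) * (coeff i f * coeff (n - i) g) := by
  simp only [coeff_mul_eq_sum_range, coeff_rescale]
  exact sum_congr rfl fun _ _ ↦ by ring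

end PowerSeries

open PowerSeries in
theorem single_site_gradient_identity_general (g : ℕ → ℝ)
    (𝔡 : ℕ → ℕ → ℝ)
    (hrec : ∀ m n : ℕ, 𝔡 m (n + 1) = ∑ j ∈ Finset.range (m + 1), g (m - j) * 𝔡 j n) :
    ∀ (s : ℕ) (u v : ℝ) (a b : ℕ), 1 ≤ a →
      ∑ r ∈ Finset.range (s + 1),
          u ^ r * v ^ (s - r) * (𝔡 r (a - 1) * 𝔡 (s - r) (b + 1) - 𝔡 r a * 𝔡 (s - r) b)
        = ∑ ℓ ∈ Finset.range s,
            (v ^ (s - ℓ) - u ^ (s - ℓ)) * g (s - ℓ) *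
              ∑ r ∈ Finset.range (ℓ + 1),
                u ^ r * v ^ (ℓ - r) * (𝔡 r (a - 1) * 𝔡 (ℓ - r) b) := by
  intro s u v a b ha
  obtain ⟨a, rfl⟩ := Nat.exists_eq_add_of_le' ha
  set D : ℕ → ℝ⟦X⟧ := fun n ↦ mk fun m ↦ 𝔡 m n
  have hD (n : ℕ) : D (n + 1) = mk g * D n := by
    simp only [D, hrec, mk_sum_range_mul_eq_mul]
  have hG : constantCoeff (rescale v (mk g) - rescale u (mk g)) = 0 := by
    rw [← coeff_zero_eq_constantCoeff_apply, map_sub, coeff_rescale, coeff_rescale, pow_zero,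
      pow_zero, sub_self]
  calc _ = coeff s (rescale u (D a) * rescale v (D (b + 1))
          - rescale u (D (a + 1)) * rescale v (D b)) := by
        simp only [map_sub, coeff_rescale_mul_rescale, ← sum_sub_distrib, mul_sub, D, coeff_mk,
          Nat.add_sub_cancel]
    _ = coeff s (rescale u (D a) * rescale v (D b) * (rescale v (mk g) - rescale u (mk g))) := by
        rw [hD, hD, map_mul, map_mul]
        congr 1
        ring
    _ = _ := by
        rw [coeff_mul_eq_sum_range_of_constantCoeff_eq_zero _ hG]
        refine sum_congr rfl fun ℓ _ ↦ ?_
        simp only [coeff_rescale_mul_rescale, map_sub, coeff_rescale, coeff_mk, D,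
          Nat.add_sub_cancel]
        ring

/-- Single-site gradient identity for duality polynomials: if `𝔡` satisfies the
convolution recursion `𝔡 m (n+1) = ∑_{j≤m} g(m-j) 𝔡 j n` with `g 0 = 1`, then for all
`s`, `u`, `v` and `a ≥ 1`, `b`:
`∑_{r=0}^s u^r v^{s-r} (𝔡(r,a-1) 𝔡(s-r,b+1) - 𝔡(r,a) 𝔡(s-r,b))
  = ∑_{ℓ=0}^{s-1} (v^{s-ℓ} - u^{s-ℓ}) g(s-ℓ) ∑_{r=0}^{ℓ} u^r v^{ℓ-r} 𝔡(r,a-1) 𝔡(ℓ-r,b)`. -/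
theorem single_site_gradient_identity (g : ℕ → ℝ) (hg : g 0 = 1)
    (𝔡 : ℕ → ℕ → ℝ)
    (hrec : ∀ m n : ℕ, 𝔡 m (n + 1) = ∑ j ∈ Finset.range (m + 1), g (m - j) * 𝔡 j n) :
    ∀ (s : ℕ) (u v : ℝ) (a b : ℕ), 1 ≤ a →
      ∑ r ∈ Finset.range (s + 1),
          u ^ r * v ^ (s - r) * (𝔡 r (a - 1) * 𝔡 (s - r) (b + 1) - 𝔡 r a * 𝔡 (s - r) b)
        = ∑ ℓ ∈ Finset.range s,
            (v ^ (s - ℓ) - u ^ (s - ℓ)) * g (s - ℓ) *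
              ∑ r ∈ Finset.range (ℓ + 1),
                u ^ r * v ^ (ℓ - r) * (𝔡 r (a - 1) * 𝔡 (ℓ - r) b) :=
  single_site_gradient_identity_general g 𝔡 hrec
end
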